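/- arXiv:2605.29395 — 3 statements merged into one kernel-verified Lean document; each statement's English description precedes it below -/
import Mathlib

section
/- Let r, M ≥ 1, let a_1,…,a_M ∈ ℝ^r, y_1,…,y_M ∈ ℝ, η*_1,…,η*_M ∈ ℝ, d_1,…,d_M ∈ ℝ, and θ* ∈ ℝ^r. Let σ(x) = 1/(1+e^{−x}) and let L₃ := sup_{x∈ℝ} |σ''(x)|. Define the score map S(θ) := Σ_{ℓ=1}^M a_ℓ (y_ℓ − σ(η*_ℓ + a_ℓ·(θ − θ*) + d_ℓ)), the noise vector N := Σ_ℓ a_ℓ (y_ℓ − σ(η*_ℓ)), the matrix H := Σ_ℓ σ'(η*_ℓ) a_ℓ a_ℓ^T with smallest eigenvalue λ := λ_min(H), the bias vector B := Σ_ℓ σ'(η*_ℓ) a_ℓ d_ℓ, and the moments β := sup_{‖v‖₂=1} Σ_ℓ |a_ℓ·v| d_ℓ² and γ := sup_{‖v‖₂=1} Σ_ℓ |a_ℓ·v|³. If λ > 0, γ > 0, and R := ‖N‖₂ + ‖B‖₂ + L₃β satisfies R ≤ λ²/(4 L₃ γ), then there exists θ̂ ∈ ℝ^r with S(θ̂)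 = 0 and ‖θ̂ − θ*‖₂ ≤ 2R/λ. -/
/-!
The score `S` is minus the gradient of the negative log-likelihood
`φ θ = ∑ ℓ (log (1 + exp z_ℓ) - y_ℓ z_ℓ)`, `z_ℓ = η*_ℓ + ⟪a_ℓ, θ - θ*⟫ + d_ℓ`.
Expanding `σ` to second order around `η*_ℓ` shows that on the sphere of radius `ρ = 2R/λ`
about `θ*` the radial component of the score satisfies
`⟪S (θ* + ρ u), u⟫ ≤ R - ρλ + L₃γρ²`, which is `≤ 0` by the assumption on `R`.
So `-S` points outward on that sphere, and at a minimiser of `φ` on the closed ball the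
first-order optimality condition then forces the gradient to vanish.
-/

noncomputable def logistic : ℝ → ℝ := fun x => (1 + Real.exp (-x))⁻¹

open scoped RealInnerProductSpace
open Set Metric

theorem abs_sub_sub_deriv_mul_le_of_abs_deriv_deriv_le {f : ℝ → ℝ} (hf : ContDiff ℝ 2 f)
    {L : ℝ} (hL : ∀ x, |deriv (deriv f) x| ≤ L) (x s : ℝ) :
    |f (x + s) - f x - deriv f x * s| ≤ L / 2 * s ^ 2 := by
  rcases eq_or_ne s 0 with rfl | hs
  · simp
  have hne : x ≠ x + s := by simpa [eq_comm] using hs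
  obtain ⟨ξ, -, hξ⟩ := taylor_mean_remainder_lagrange_iteratedDeriv (n := 1) hne hf.contDiffOn
  have hderiv : derivWithin f (uIcc x (x + s)) x = deriv f x :=
    (hf.differentiable (by norm_num) x).derivWithin (uniqueDiffOn_uIcc hne x left_mem_uIcc)
  simp only [taylor_within_apply, Finset.sum_range_succ, Finset.sum_range_zero,
    iteratedDerivWithin_zero, iteratedDerivWithin_one, hderiv, iteratedDeriv_succ,
    iteratedDeriv_zero, add_sub_cancel_left, Nat.factorial, Nat.cast_one, inv_one, pow_zero,
    pow_one, one_mul, smul_eq_mul, zero_add, Nat.reduceAdd] at hξ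
  have hrem : f (x + s) - f x - deriv f x * s = deriv (deriv f) ξ * s ^ 2 / 2 := by
    linear_combination hξ
  rw [hrem, abs_div, abs_mul, abs_sq, abs_two]
  nlinarith [hL ξ, sq_nonneg s]

namespace Real

theorem hasDerivAt_log_one_add_exp (x : ℝ) :
    HasDerivAt (fun x => log (1 + exp x)) (sigmoid x) x := by
  convert ((hasDerivAt_exp x).const_add 1).log (by positivity) using 1
  rw [sigmoid_def, exp_neg]
  field_simp
  ring

theorem deriv_deriv_sigmoid :
    deriv (deriv sigmoid) = fun x => sigmoid x * (1 - sigmoid x) * (1 - 2 * sigmoid x) := by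
  rw [deriv_sigmoid]
  funext x
  rw [((hasDerivAt_sigmoid x).fun_mul ((hasDerivAt_sigmoid x).const_sub 1)).deriv]
  ring

theorem abs_deriv_deriv_sigmoid_le_one (x : ℝ) : |deriv (deriv sigmoid) x| ≤ 1 := by
  have h0 := sigmoid_pos x
  have h1 := sigmoid_lt_one x
  rw [deriv_deriv_sigmoid, abs_le]
  constructor <;> nlinarith [mul_pos h0 (sub_pos.2 h1)]

end Real

theorem eq_div_norm_smul_of_mul_norm_le_inner {E : Type*} [NormedAddCommGroup E]
    [InnerProductSpace ℝ E] {v w : E} {ρ : ℝ} (hv : v ≠ 0) (hw : ‖w‖ ≤ ρ)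
    (h : ρ * ‖v‖ ≤ ⟪v, w⟫) : w = (ρ / ‖v‖) • v := by
  have hv : 0 < ‖v‖ := norm_pos_iff.2 hv
  have hcs : ⟪v, w⟫ ≤ ‖v‖ * ‖w‖ := real_inner_le_norm v w
  have hwρ : ‖w‖ = ρ := le_antisymm hw (le_of_mul_le_mul_left (by linarith) hv)
  have heq : ‖w‖ • v = ‖v‖ • w := inner_eq_norm_mul_iff_real.1 (by rw [hwρ] at hcs ⊢; linarith)
  rw [hwρ] at heq
  rw [div_eq_inv_mul, ← smul_smul, heq, smul_smul, inv_mul_cancel₀ hv.ne', one_smul]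

theorem exists_mem_closedBall_gradient_eq_zero {E : Type*} [NormedAddCommGroup E]
    [InnerProductSpace ℝ E] [ProperSpace E] {φ : E → ℝ} {g : E → E}
    (hφ : ∀ x, HasGradientAt φ (g x) x) {c : E} {ρ : ℝ} (hρ : 0 ≤ ρ)
    (hg : ∀ u, ‖u‖ = 1 → 0 ≤ ⟪g (c + ρ • u), u⟫) :
    ∃ x ∈ closedBall c ρ, g x = 0 := by
  obtain ⟨x₀, hx₀, hmin⟩ := (isCompact_closedBall c ρ).exists_isMinOn
    ⟨c, mem_closedBall_self hρ⟩ (continuous_iff_continuousAt.2 fun x =>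
      (hφ x).hasFDerivAt.continuousAt).continuousOn
  refine ⟨x₀, hx₀, ?_⟩
  by_contra hne
  set v := g x₀
  have hopt : ∀ x ∈ closedBall c ρ, 0 ≤ ⟪v, x - x₀⟫ := fun x hx =>
    hmin.localize.hasFDerivWithinAt_nonneg (hφ x₀).hasFDerivAt.hasFDerivWithinAt
      (sub_mem_posTangentConeAt_of_segment_subset ((convex_closedBall c ρ).segment_subset hx₀ hx))
  set u := ‖v‖⁻¹ • -v
  have hu : ‖u‖ = 1 := by simp [u, norm_smul, hne]
  have hvu : ⟪v, u⟫ = -‖v‖ := by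
    simp only [u, inner_smul_right, inner_neg_right, real_inner_self_eq_norm_sq]
    field_simp
  -- testing optimality against the point `c + ρ • u` of the ball pins `x₀` down to it
  have hx₀ : x₀ = c + ρ • u := by
    have h := hopt (c + ρ • u) (by simp [hu, norm_smul, abs_of_nonneg hρ])
    rw [show c + ρ • u - x₀ = ρ • u - (x₀ - c) by abel, inner_sub_right, real_inner_smul_right,
      hvu] at h
    have := eq_div_norm_smul_of_mul_norm_le_inner (neg_ne_zero.2 hne)
      (mem_closedBall_iff_norm.1 hx₀) (by rw [norm_neg, inner_neg_left]; linarith)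
    rw [eq_add_of_sub_eq' this, norm_neg, div_eq_mul_inv, ← smul_smul]
  have := hg u hu
  rw [← hx₀, hvu] at this
  exact hne (norm_eq_zero.1 (by linarith [norm_nonneg v]))

theorem hasGradientAt_sum_comp_inner_sub {ι E : Type*} [Fintype ι] [NormedAddCommGroup E]
    [InnerProductSpace ℝ E] [CompleteSpace E] {F f : ι → ℝ → ℝ}
    (hF : ∀ i t, HasDerivAt (F i) (f i t) t) (a : ι → E) (c θ : E) :
    HasGradientAt (fun θ => ∑ i, F i ⟪a i, θ - c⟫) (∑ i, f i ⟪a i, θ - c⟫ • a i) θ := by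
  rw [hasGradientAt_iff_hasFDerivAt, map_sum]
  refine HasFDerivAt.fun_sum fun i _ => ?_
  rw [map_smul]
  exact (hF i _).comp_hasFDerivAt θ
    ((innerSL ℝ (a i)).hasFDerivAt.comp θ ((hasFDerivAt_id θ).sub_const c))

theorem le_sSup_of_norm_eq_one {E : Type*} [NormedAddCommGroup E] [ProperSpace E] {f : E → ℝ}
    (hf : Continuous f) {v : E} (hv : ‖v‖ = 1) :
    f v ≤ sSup {c | ∃ v : E, ‖v‖ = 1 ∧ c = f v} := by
  refine le_csSup (((isCompact_sphere 0 1).bddAbove_image hf.continuousOn).mono ?_) ⟨v, hv, rfl⟩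
  rintro _ ⟨w, hw, rfl⟩
  exact ⟨w, by simpa using hw, rfl⟩

theorem sInf_le_of_norm_eq_one {E : Type*} [NormedAddCommGroup E] [ProperSpace E] {f : E → ℝ}
    (hf : Continuous f) {v : E} (hv : ‖v‖ = 1) :
    sInf {c | ∃ v : E, ‖v‖ = 1 ∧ c = f v} ≤ f v := by
  refine csInf_le (((isCompact_sphere 0 1).bddBelow_image hf.continuousOn).mono ?_) ⟨v, hv, rfl⟩
  rintro _ ⟨w, hw, rfl⟩
  exact ⟨w, by simpa using hw, rfl⟩

section Score

variable {f f' : ℝ → ℝ} {L : ℝ}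

theorem sub_apply_add_mul_le (hL : 0 ≤ L)
    (hf : ∀ x s, |f (x + s) - f x - f' x * s| ≤ L / 2 * s ^ 2) (y η d t ρ : ℝ) :
    (y - f (η + ρ * t + d)) * t ≤
      (y - f η) * t - f' η * d * t - ρ * (f' η * t ^ 2) + L * (ρ ^ 2 * |t| ^ 3 + |t| * d ^ 2) := by
  have htaylor := hf η (ρ * t + d)
  rw [← add_assoc] at htaylor
  set e := f (η + ρ * t + d) - f η - f' η * (ρ * t + d)
  have hsplit : (y - f (η + ρ * t + d)) * t =
      (y - f η) * t - f' η * d * t - ρ * (f' η * t ^ 2) - e * t := by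
    simp only [e]; ring
  have hsq : (ρ * t + d) ^ 2 ≤ 2 * (ρ ^ 2 * t ^ 2 + d ^ 2) := by
    nlinarith [sq_nonneg (ρ * t - d)]
  have hrem : -(e * t) ≤ L * (ρ ^ 2 * |t| ^ 3 + |t| * d ^ 2) :=
    calc -(e * t) ≤ |e| * |t| := (neg_le_abs _).trans_eq (abs_mul e t)
      _ ≤ L / 2 * (ρ * t + d) ^ 2 * |t| := mul_le_mul_of_nonneg_right htaylor (abs_nonneg t)
      _ ≤ L / 2 * (2 * (ρ ^ 2 * t ^ 2 + d ^ 2)) * |t| := by gcongr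
      _ = L * (ρ ^ 2 * |t| ^ 3 + |t| * d ^ 2) := by rw [pow_succ |t|, sq_abs]; ring
  linarith

variable {ι E : Type*} [Fintype ι] [NormedAddCommGroup E] [InnerProductSpace ℝ E]

theorem inner_sum_sub_apply_smul_le (hL : 0 ≤ L)
    (hf : ∀ x s, |f (x + s) - f x - f' x * s| ≤ L / 2 * s ^ 2) (a : ι → E) (y η d : ι → ℝ)
    (u : E) (ρ : ℝ) :
    ⟪∑ i, (y i - f (η i + ⟪a i, ρ • u⟫ + d i)) • a i, u⟫ ≤
      ⟪∑ i, (y i - f (η i)) • a i, u⟫ - ⟪∑ i, (f' (η i) * d i) • a i, u⟫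
        - ρ * ∑ i, f' (η i) * ⟪a i, u⟫ ^ 2
        + L * (ρ ^ 2 * ∑ i, |⟪a i, u⟫| ^ 3 + ∑ i, |⟪a i, u⟫| * d i ^ 2) := by
  simp only [sum_inner, real_inner_smul_left, real_inner_smul_right, Finset.mul_sum,
    ← Finset.sum_add_distrib, ← Finset.sum_sub_distrib]
  exact Finset.sum_le_sum fun i _ => sub_apply_add_mul_le hL hf _ _ _ _ _

theorem inner_sum_sub_apply_smul_le_of_norm_eq_one (hL : 0 ≤ L)
    (hf : ∀ x s, |f (x + s) - f x - f' x * s| ≤ L / 2 * s ^ 2) (a : ι → E) (y η d : ι → ℝ)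
    {lam β γ ρ : ℝ} {u : E} (hu : ‖u‖ = 1) (hρ : 0 ≤ ρ)
    (hlam : lam ≤ ∑ i, f' (η i) * ⟪a i, u⟫ ^ 2) (hβ : ∑ i, |⟪a i, u⟫| * d i ^ 2 ≤ β)
    (hγ : ∑ i, |⟪a i, u⟫| ^ 3 ≤ γ) :
    ⟪∑ i, (y i - f (η i + ⟪a i, ρ • u⟫ + d i)) • a i, u⟫ ≤
      ‖∑ i, (y i - f (η i)) • a i‖ + ‖∑ i, (f' (η i) * d i) • a i‖ + L * β
        - ρ * lam + L * (ρ ^ 2 * γ) := by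
  have hN := (real_inner_le_norm (∑ i, (y i - f (η i)) • a i) u).trans_eq (by rw [hu, mul_one])
  have hB := (neg_le_abs _).trans
    ((abs_real_inner_le_norm (∑ i, (f' (η i) * d i) • a i) u).trans_eq (by rw [hu, mul_one]))
  have hρlam := mul_le_mul_of_nonneg_left hlam hρ
  have hrem : L * (ρ ^ 2 * ∑ i, |⟪a i, u⟫| ^ 3 + ∑ i, |⟪a i, u⟫| * d i ^ 2) ≤
      L * (ρ ^ 2 * γ + β) := by
    gcongr
  linarith [inner_sum_sub_apply_smul_le hL hf a y η d u ρ]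

end Score

theorem sub_mul_add_mul_sq_nonpos {R lam L γ : ℝ} (hR : 0 ≤ R) (hlam : 0 ≤ lam) (hL : 0 ≤ L)
    (hγ : 0 ≤ γ) (hcond : R ≤ lam ^ 2 / (4 * L * γ)) :
    R - 2 * R / lam * lam + L * ((2 * R / lam) ^ 2 * γ) ≤ 0 := by
  rcases hlam.eq_or_lt with rfl | hlam
  · -- `2 * R / 0 = 0`, and `hcond` reads `R ≤ 0`
    simp only [ne_eq, OfNat.ofNat_ne_zero, not_false_eq_true, zero_pow, zero_div, div_zero,
      mul_zero, sub_zero, zero_mul, add_zero] at hcond ⊢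
    linarith
  have hkey : 4 * L * γ * R ^ 2 ≤ R * lam ^ 2 := by
    rcases (by positivity : 0 ≤ 4 * L * γ).eq_or_lt with h | h
    · rw [← h, zero_mul]; positivity
    · nlinarith [(le_div_iff₀ h).1 hcond]
  field_simp
  nlinarith

theorem logistic_eq_sigmoid : logistic = Real.sigmoid := rfl

theorem deriv_logistic_nonneg (x : ℝ) : 0 ≤ deriv logistic x := by
  rw [logistic_eq_sigmoid, Real.deriv_sigmoid]
  exact mul_nonneg (Real.sigmoid_nonneg x) (sub_nonneg.2 (Real.sigmoid_le_one x))

theorem bddAbove_range_abs_deriv_deriv_logistic :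
    BddAbove (range fun x => |deriv (deriv logistic) x|) :=
  ⟨1, by rintro _ ⟨x, rfl⟩; exact Real.abs_deriv_deriv_sigmoid_le_one x⟩

theorem abs_logistic_add_sub_sub_le {L : ℝ} (hL : ∀ x, |deriv (deriv logistic) x| ≤ L)
    (x s : ℝ) : |logistic (x + s) - logistic x - deriv logistic x * s| ≤ L / 2 * s ^ 2 :=
  abs_sub_sub_deriv_mul_le_of_abs_deriv_deriv_le (contDiff_sigmoid.of_le le_top) hL x s

theorem hasDerivAt_log_one_add_exp_add_sub_mul (y b t : ℝ) :
    HasDerivAt (fun t => Real.log (1 + Real.exp (t + b)) - y * t) (logistic (t + b) - y) t := by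
  have h := ((Real.hasDerivAt_log_one_add_exp (t + b)).comp t
    ((hasDerivAt_id t).add_const b)).fun_sub ((hasDerivAt_id t).const_mul y)
  simpa [logistic_eq_sigmoid, Function.comp_def] using h

theorem hasGradientAt_logistic_negLogLikelihood {ι E : Type*} [Fintype ι] [NormedAddCommGroup E]
    [InnerProductSpace ℝ E] [CompleteSpace E] (a : ι → E) (y η d : ι → ℝ) (c θ : E) :
    HasGradientAt (fun θ => ∑ i, (Real.log (1 + Real.exp (⟪a i, θ - c⟫ + (η i + d i)))
        - y i * ⟪a i, θ - c⟫))
      (-∑ i, (y i - logistic (η i + ⟪a i, θ - c⟫ + d i)) • a i) θ := by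
  convert hasGradientAt_sum_comp_inner_sub
    (fun i => hasDerivAt_log_one_add_exp_add_sub_mul (y i) (η i + d i)) a c θ using 1
  simp only [← Finset.sum_neg_distrib, ← neg_smul, neg_sub]
  congr! 3
  exact congrArg logistic (by ring)

theorem stmt_4_general (r M : ℕ)
    (a : Fin M → EuclideanSpace ℝ (Fin r))
    (y ηstar dres : Fin M → ℝ) (θstar : EuclideanSpace ℝ (Fin r))
    (S : EuclideanSpace ℝ (Fin r) → EuclideanSpace ℝ (Fin r))
    (hS : ∀ θ, S θ = ∑ ℓ, (y ℓ - logistic (ηstar ℓ + ⟪a ℓ, θ - θstar⟫ + dres ℓ)) • a ℓ)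
    (N : EuclideanSpace ℝ (Fin r))
    (hN : N = ∑ ℓ, (y ℓ - logistic (ηstar ℓ)) • a ℓ)
    (lam : ℝ)
    (hlam : lam = sInf {c : ℝ | ∃ v : EuclideanSpace ℝ (Fin r), ‖v‖ = 1 ∧
        c = ∑ ℓ, deriv logistic (ηstar ℓ) * ⟪a ℓ, v⟫ ^ 2})
    (B : EuclideanSpace ℝ (Fin r))
    (hB : B = ∑ ℓ, (deriv logistic (ηstar ℓ) * dres ℓ) • a ℓ)
    (β γ L₃ R : ℝ)
    (hβ : β = sSup {c : ℝ | ∃ v : EuclideanSpace ℝ (Fin r), ‖v‖ = 1 ∧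
        c = ∑ ℓ, |⟪a ℓ, v⟫| * dres ℓ ^ 2})
    (hγ : γ = sSup {c : ℝ | ∃ v : EuclideanSpace ℝ (Fin r), ‖v‖ = 1 ∧
        c = ∑ ℓ, |⟪a ℓ, v⟫| ^ 3})
    (hL₃ : L₃ = ⨆ x : ℝ, |deriv (deriv logistic) x|)
    (hR : R = ‖N‖ + ‖B‖ + L₃ * β)
    (hcond : R ≤ lam ^ 2 / (4 * L₃ * γ)) :
    ∃ θhat : EuclideanSpace ℝ (Fin r), S θhat = 0 ∧ ‖θhat - θstar‖ ≤ 2 * R / lam := by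
  have hL₃_ge (x : ℝ) : |deriv (deriv logistic) x| ≤ L₃ :=
    hL₃ ▸ le_ciSup bddAbove_range_abs_deriv_deriv_logistic x
  have hL₃_nonneg : 0 ≤ L₃ := (abs_nonneg _).trans (hL₃_ge 0)
  have hβ_nonneg : 0 ≤ β := hβ ▸ Real.sSup_nonneg (by rintro _ ⟨v, -, rfl⟩; positivity)
  have hγ_nonneg : 0 ≤ γ := hγ ▸ Real.sSup_nonneg (by rintro _ ⟨v, -, rfl⟩; positivity)
  have hlam_nonneg : 0 ≤ lam := hlam ▸ Real.sInf_nonneg (by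
    rintro _ ⟨v, -, rfl⟩
    exact Finset.sum_nonneg fun ℓ _ => mul_nonneg (deriv_logistic_nonneg _) (sq_nonneg _))
  have hR_nonneg : 0 ≤ R := hR ▸ by positivity
  have hρ : 0 ≤ 2 * R / lam := by positivity
  obtain ⟨θhat, hθhat, hzero⟩ := exists_mem_closedBall_gradient_eq_zero (c := θstar)
      (fun θ => (hS θ).symm ▸ hasGradientAt_logistic_negLogLikelihood a y ηstar dres θstar θ)
      hρ fun u hu => by
    have hradial := inner_sum_sub_apply_smul_le_of_norm_eq_one hL₃_nonneg
      (abs_logistic_add_sub_sub_le hL₃_ge) a y ηstar dres (lam := lam) (β := β) (γ := γ) hu hρ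
      (by rw [hlam]; apply sInf_le_of_norm_eq_one _ hu; fun_prop)
      (by rw [hβ]; apply le_sSup_of_norm_eq_one _ hu; fun_prop)
      (by rw [hγ]; apply le_sSup_of_norm_eq_one _ hu; fun_prop)
    rw [← hN, ← hB, ← hR] at hradial
    rw [inner_neg_left, neg_nonneg, hS, add_sub_cancel_left]
    linarith [sub_mul_add_mul_sq_nonpos hR_nonneg hlam_nonneg hL₃_nonneg hγ_nonneg hcond]
  exact ⟨θhat, neg_eq_zero.1 hzero, mem_closedBall_iff_norm.1 hθhat⟩

/-- row-wise deterministic existence for the logistic score equation.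
Here `lam` is the smallest eigenvalue of `H = Σ σ'(η*_ℓ) a_ℓ a_ℓᵀ`, characterized via the
Rayleigh quotient as the infimum of `v ↦ Σ σ'(η*_ℓ) ⟨a_ℓ, v⟩²` over unit vectors, `β` and
`γ` are suprema over unit vectors, and `L₃ = sup |σ''|`. If
`R = ‖N‖ + ‖B‖ + L₃β ≤ λ²/(4L₃γ)` with `λ, γ > 0`, then the score map `S` has a zero
within distance `2R/λ` of `θ*`. -/
theorem stmt_4 (r M : ℕ) (hr : 1 ≤ r) (hM : 1 ≤ M)
    (a : Fin M → EuclideanSpace ℝ (Fin r))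
    (y ηstar dres : Fin M → ℝ) (θstar : EuclideanSpace ℝ (Fin r))
    (S : EuclideanSpace ℝ (Fin r) → EuclideanSpace ℝ (Fin r))
    (hS : ∀ θ, S θ = ∑ ℓ, (y ℓ - logistic (ηstar ℓ + ⟪a ℓ, θ - θstar⟫ + dres ℓ)) • a ℓ)
    (N : EuclideanSpace ℝ (Fin r))
    (hN : N = ∑ ℓ, (y ℓ - logistic (ηstar ℓ)) • a ℓ)
    (lam : ℝ)
    (hlam : lam = sInf {c : ℝ | ∃ v : EuclideanSpace ℝ (Fin r), ‖v‖ = 1 ∧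
        c = ∑ ℓ, deriv logistic (ηstar ℓ) * ⟪a ℓ, v⟫ ^ 2})
    (B : EuclideanSpace ℝ (Fin r))
    (hB : B = ∑ ℓ, (deriv logistic (ηstar ℓ) * dres ℓ) • a ℓ)
    (β γ L₃ R : ℝ)
    (hβ : β = sSup {c : ℝ | ∃ v : EuclideanSpace ℝ (Fin r), ‖v‖ = 1 ∧
        c = ∑ ℓ, |⟪a ℓ, v⟫| * dres ℓ ^ 2})
    (hγ : γ = sSup {c : ℝ | ∃ v : EuclideanSpace ℝ (Fin r), ‖v‖ = 1 ∧
        c = ∑ ℓ, |⟪a ℓ, v⟫| ^ 3})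
    (hL₃ : L₃ = ⨆ x : ℝ, |deriv (deriv logistic) x|)
    (hR : R = ‖N‖ + ‖B‖ + L₃ * β)
    (hlam_pos : 0 < lam) (hγ_pos : 0 < γ)
    (hcond : R ≤ lam ^ 2 / (4 * L₃ * γ)) :
    ∃ θhat : EuclideanSpace ℝ (Fin r), S θhat = 0 ∧ ‖θhat - θstar‖ ≤ 2 * R / lam :=
  stmt_4_general r M a y ηstar dres θstar S hS N hN lam hlam B hB β γ L₃ R hβ hγ hL₃ hR hcond
end

section
/- Fix 1 ≤ K < d, scores θ, θ̂ ∈ ℝ^d, and ε ≥ 0 with max_m |θ̂_m − θ_m| ≤ ε. Let S ⊆ {1,…,d} with |S| = K satisfy θ_u ≥ θ_v for all u ∈ S and v ∉ S (a true top-K set), and let Ŝ ⊆ {1,…,d} with |Ŝ| = K satisfy θ̂_u ≥ θ̂_v for all u ∈ Ŝ and v ∉ Ŝ (an estimated top-K set). Let τ := (min_{u∈S} θ_u + max_{v∉S} θ_v)/2 be the top-K decision boundary. Then the symmetric difference satisfies Ŝ △ S ⊆ {m : |θ_m − τ| ≤ 2ε}, and in particular |Ŝ △ S| ≤ |{m :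 |θ_m − τ| ≤ 2ε}|. -/
/-!
If `θ̂` ranks `m` above `n` while `θ` puts `n` in the top-`K` set and `m` outside it, then
`θ m ≤ τ ≤ θ n` and, since `θ̂` is `ε`-close to `θ`, `θ n ≤ θ m + 2ε`; so both `m` and `n` lie
within `2ε` of `τ`. Every element of `Ŝ △ S` belongs to such a misordered pair, because the two
top-`K` sets have the same size: an element of `Ŝ \ S` forces one of `S \ Ŝ`, and conversely.
-/

open scoped symmDiff Classical

theorem Finset.exists_mem_notMem_of_card_eq {α : Type*} {s t : Finset α} (h : s.card = t.card)
    {a : α} (has : a ∈ s) (hat : a ∉ t) : ∃ b ∈ t, b ∉ s := by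
  by_contra! hts
  exact hat (Finset.eq_of_subset_of_card_le hts h.le ▸ has)

section TopBoundary

variable {ι : Type*} {θ : ι → ℝ} {s : Set ι}

theorem le_sSup_image_compl (hs : ∀ u ∈ s, ∀ v ∉ s, θ v ≤ θ u) {u v : ι} (hu : u ∈ s)
    (hv : v ∉ s) : θ v ≤ sSup (θ '' sᶜ) :=
  le_csSup ⟨θ u, by rintro _ ⟨w, hw, rfl⟩; exact hs u hu w hw⟩ ⟨v, hv, rfl⟩

theorem sInf_image_le (hs : ∀ u ∈ s, ∀ v ∉ s, θ v ≤ θ u) {u v : ι} (hu : u ∈ s)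
    (hv : v ∉ s) : sInf (θ '' s) ≤ θ u :=
  csInf_le ⟨θ v, by rintro _ ⟨w, hw, rfl⟩; exact hs w hw v hv⟩ ⟨u, hu, rfl⟩

theorem sSup_image_compl_le_sInf_image (hs : ∀ u ∈ s, ∀ v ∉ s, θ v ≤ θ u) {u v : ι}
    (hu : u ∈ s) (hv : v ∉ s) : sSup (θ '' sᶜ) ≤ sInf (θ '' s) :=
  csSup_le ⟨θ v, v, hv, rfl⟩ fun _ ⟨w, hw, hθw⟩ =>
    le_csInf ⟨θ u, u, hu, rfl⟩ fun _ ⟨w', hw', hθw'⟩ => hθw ▸ hθw' ▸ hs w' hw' w hw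

theorem midpoint_boundary_mem_Icc (hs : ∀ u ∈ s, ∀ v ∉ s, θ v ≤ θ u) {u v : ι} (hu : u ∈ s)
    (hv : v ∉ s) : θ v ≤ (sInf (θ '' s) + sSup (θ '' sᶜ)) / 2 ∧
      (sInf (θ '' s) + sSup (θ '' sᶜ)) / 2 ≤ θ u := by
  have hvb := le_sSup_image_compl hs hu hv
  have hau := sInf_image_le hs hu hv
  have hba := sSup_image_compl_le_sInf_image hs hu hv
  constructor <;> linarith

end TopBoundary

theorem le_add_two_mul_of_abs_sub_le {x y x' y' ε : ℝ} (hx : |x' - x| ≤ ε) (hy : |y' - y| ≤ ε)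
    (h : x' ≤ y') : x ≤ y + 2 * ε := by
  linarith [abs_le.1 hx, abs_le.1 hy]

theorem abs_sub_le_of_misordered {ι : Type*} {θ θhat : ι → ℝ} {ε τ : ℝ}
    (herr : ∀ m, |θhat m - θ m| ≤ ε) {m n : ι} (hm : θ m ≤ τ) (hn : τ ≤ θ n)
    (hhat : θhat n ≤ θhat m) : |θ m - τ| ≤ 2 * ε ∧ |θ n - τ| ≤ 2 * ε := by
  have hnm : θ n ≤ θ m + 2 * ε := le_add_two_mul_of_abs_sub_le (herr n) (herr m) hhat
  constructor <;> rw [abs_le] <;> constructor <;> linarith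

theorem stmt_8_general (d K : ℕ)
    (θ θhat : Fin d → ℝ) (ε : ℝ)
    (herr : ∀ m, |θhat m - θ m| ≤ ε)
    (S Shat : Finset (Fin d))
    (hScard : S.card = K) (hStop : ∀ u ∈ S, ∀ v ∉ S, θ v ≤ θ u)
    (hShatcard : Shat.card = K) (hShattop : ∀ u ∈ Shat, ∀ v ∉ Shat, θhat v ≤ θhat u)
    (τ : ℝ)
    (hτ : τ = (sInf (θ '' (S : Set (Fin d))) + sSup (θ '' ((Sᶜ : Finset (Fin d)) : Set (Fin d)))) / 2) :
    (Shat ∆ S) ⊆ Finset.univ.filter (fun m => |θ m - τ| ≤ 2 * ε) ∧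
    (Shat ∆ S).card ≤ (Finset.univ.filter (fun m => |θ m - τ| ≤ 2 * ε)).card := by
  have hsep : ∀ u ∈ S, ∀ v ∉ S, θ v ≤ τ ∧ τ ≤ θ u := fun u hu v hv => by
    rw [hτ, Finset.coe_compl]
    exact midpoint_boundary_mem_Icc (s := (S : Set (Fin d))) hStop hu hv
  have hcard : Shat.card = S.card := hShatcard.trans hScard.symm
  have hnear : ∀ m ∈ Shat ∆ S, |θ m - τ| ≤ 2 * ε := by
    intro m hm
    rcases Finset.mem_symmDiff.1 hm with ⟨hmhat, hmS⟩ | ⟨hmS, hmhat⟩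
    · obtain ⟨n, hnS, hnhat⟩ := Finset.exists_mem_notMem_of_card_eq hcard hmhat hmS
      obtain ⟨hmτ, hτn⟩ := hsep n hnS m hmS
      exact (abs_sub_le_of_misordered herr hmτ hτn (hShattop m hmhat n hnhat)).1
    · obtain ⟨n, hnhat, hnS⟩ := Finset.exists_mem_notMem_of_card_eq hcard.symm hmS hmhat
      obtain ⟨hnτ, hτm⟩ := hsep m hmS n hnS
      exact (abs_sub_le_of_misordered herr hnτ hτm (hShattop n hnhat m hmhat)).2
  have hsub : Shat ∆ S ⊆ Finset.univ.filter (fun m => |θ m - τ| ≤ 2 * ε) := fun m hm =>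
    Finset.mem_filter.2 ⟨Finset.mem_univ m, hnear m hm⟩
  exact ⟨hsub, Finset.card_le_card hsub⟩

/-- top-`K` boundary inclusion. If `‖θ̂ − θ‖_∞ ≤ ε`, `S` is a true
top-`K` set for `θ` and `Ŝ` an estimated top-`K` set for `θ̂`, and `τ` is the midpoint of
the `K`-th and `(K+1)`-st true scores, then every model in the symmetric difference
`Ŝ △ S` has true score within `2ε` of `τ`. -/
theorem stmt_8 (d K : ℕ) (hK : 1 ≤ K) (hKd : K < d)
    (θ θhat : Fin d → ℝ) (ε : ℝ) (hε : 0 ≤ ε)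
    (herr : ∀ m, |θhat m - θ m| ≤ ε)
    (S Shat : Finset (Fin d))
    (hScard : S.card = K) (hStop : ∀ u ∈ S, ∀ v ∉ S, θ v ≤ θ u)
    (hShatcard : Shat.card = K) (hShattop : ∀ u ∈ Shat, ∀ v ∉ Shat, θhat v ≤ θhat u)
    (τ : ℝ)
    (hτ : τ = (sInf (θ '' (S : Set (Fin d))) + sSup (θ '' ((Sᶜ : Finset (Fin d)) : Set (Fin d)))) / 2) :
    (Shat ∆ S) ⊆ Finset.univ.filter (fun m => |θ m - τ| ≤ 2 * ε) ∧
    (Shat ∆ S).card ≤ (Finset.univ.filter (fun m => |θ m - τ| ≤ 2 * ε)).card :=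
  stmt_8_general d K θ θhat ε herr S Shat hScard hStop hShatcard hShattop τ hτ
end

section
/- Let U ∈ ℝ^{d₁×r} and V ∈ ℝ^{d₂×r} have orthonormal columns with 1_{d₁}^T U = 0, and suppose the μ-incoherence bounds max_t ‖U^T e_t‖₂² ≤ μr/d₁ and max_m ‖V^T e_m‖₂² ≤ μr/d₂ hold, together with μr ≤ d₁. Let P be the orthogonal projection Γ ↦ U U^T Γ + P_{1⊥} Γ V V^T − U U^T Γ V V^T, where P_{1⊥} = I − (1/d₁)·1 1^T. Then for every pairwise design matrix X = e_t (e_m − e_{m'})^T with m ≠ m', the Frobenius norm of its projection satisfies ‖P X‖_F ≤ 2√(μr/d₁) + 4√(μr/d₂). -/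
/-!
The design matrix is the rank-one matrix `e_t δᵀ` with `δ = e_m − e_{m'}`, and the projector
sends a rank-one matrix `u vᵀ` to `(UUᵀu) vᵀ + (P_{1⊥}u)(VVᵀv)ᵀ − (UUᵀu)(VVᵀv)ᵀ`. The Frobenius
norm of `u vᵀ` is `‖u‖ ‖v‖`. Since `U` and `V` are isometries, `‖UUᵀe_t‖ = ‖Uᵀe_t‖ ≤ √(μr/d₁)`,
which is at most `1` because `μr ≤ d₁`, and `‖VVᵀδ‖ = ‖Vᵀδ‖ ≤ 2√(μr/d₂)`; moreover `‖δ‖ ≤ 2`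
and `‖P_{1⊥}e_t‖ ≤ ‖e_t‖ = 1`. The triangle inequality over the three terms gives
`2√(μr/d₁) + 2√(μr/d₂) + 2√(μr/d₂)`.
-/

open Matrix

/-- Frobenius norm of a real matrix. -/
noncomputable def frobNorm {d₁ d₂ : ℕ} (M : Matrix (Fin d₁) (Fin d₂) ℝ) : ℝ :=
  Real.sqrt (∑ i, ∑ j, M i j ^ 2)

/-- The tangent-space projector `Γ ↦ P_U Γ + P_{1⊥} Γ P_V − P_U Γ P_V`. -/
noncomputable def lowRankTangentProj (d₁ d₂ r : ℕ)
    (U : Matrix (Fin d₁) (Fin r) ℝ) (V : Matrix (Fin d₂) (Fin r) ℝ)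
    (Γ : Matrix (Fin d₁) (Fin d₂) ℝ) : Matrix (Fin d₁) (Fin d₂) ℝ :=
  U * Uᵀ * Γ
    + ((1 : Matrix (Fin d₁) (Fin d₁) ℝ) - (d₁ : ℝ)⁻¹ • Matrix.of (fun _ _ => (1 : ℝ)))
        * Γ * (V * Vᵀ)
    - U * Uᵀ * Γ * (V * Vᵀ)

open WithLp

section FrobeniusNorm

attribute [local instance] Matrix.frobeniusNormedAddCommGroup

variable {d₁ d₂ : ℕ}

lemma frobNorm_eq_norm (M : Matrix (Fin d₁) (Fin d₂) ℝ) : frobNorm M = ‖M‖ := by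
  simp [frobNorm, frobenius_norm_def, Real.sqrt_eq_rpow]

lemma frobNorm_add_le (A B : Matrix (Fin d₁) (Fin d₂) ℝ) :
    frobNorm (A + B) ≤ frobNorm A + frobNorm B := by
  simpa only [frobNorm_eq_norm] using norm_add_le A B

lemma frobNorm_sub_le (A B : Matrix (Fin d₁) (Fin d₂) ℝ) :
    frobNorm (A - B) ≤ frobNorm A + frobNorm B := by
  simpa only [frobNorm_eq_norm] using norm_sub_le A B

lemma frobNorm_vecMulVec (u : Fin d₁ → ℝ) (v : Fin d₂ → ℝ) :
    frobNorm (vecMulVec u v) = ‖toLp 2 u‖ * ‖toLp 2 v‖ := by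
  simp only [frobNorm, EuclideanSpace.norm_eq, Real.norm_eq_abs, sq_abs, vecMulVec_apply, mul_pow,
    ← Finset.sum_mul_sum, Real.sqrt_mul (Finset.sum_nonneg fun i _ => sq_nonneg (u i))]

end FrobeniusNorm

section OrthonormalColumns

variable {n k : Type*} [Fintype n] [Fintype k] [DecidableEq k] {W : Matrix n k ℝ}

lemma norm_mulVec_of_transpose_mul_self (hW : Wᵀ * W = 1) (x : k → ℝ) :
    ‖toLp 2 (W *ᵥ x)‖ = ‖toLp 2 x‖ := by
  have hdot : (W *ᵥ x) ⬝ᵥ (W *ᵥ x) = x ⬝ᵥ x := by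
    rw [dotProduct_mulVec, ← mulVec_transpose, mulVec_mulVec, hW, one_mulVec]
  rw [EuclideanSpace.norm_eq, EuclideanSpace.norm_eq]
  simpa [dotProduct, ← sq] using congrArg Real.sqrt hdot

lemma norm_mul_transpose_mulVec (hW : Wᵀ * W = 1) (x : n → ℝ) :
    ‖toLp 2 ((W * Wᵀ) *ᵥ x)‖ = ‖toLp 2 (Wᵀ *ᵥ x)‖ := by
  rw [← mulVec_mulVec, norm_mulVec_of_transpose_mul_self hW]

lemma norm_vecMul_mul_transpose (hW : Wᵀ * W = 1) (x : n → ℝ) :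
    ‖toLp 2 (x ᵥ* (W * Wᵀ))‖ = ‖toLp 2 (Wᵀ *ᵥ x)‖ := by
  rw [← vecMul_vecMul, vecMul_transpose, ← mulVec_transpose, norm_mulVec_of_transpose_mul_self hW]

end OrthonormalColumns

lemma norm_transpose_mulVec_single {n k : Type*} [Fintype n] [DecidableEq n] [Fintype k]
    (W : Matrix n k ℝ) (i : n) : ‖toLp 2 (Wᵀ *ᵥ Pi.single i 1)‖ = √(∑ j, W i j ^ 2) := by
  simp [EuclideanSpace.norm_eq]

noncomputable def centeringMatrix (d : ℕ) : Matrix (Fin d) (Fin d) ℝ :=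
  1 - (d : ℝ)⁻¹ • of fun _ _ => 1

lemma norm_centeringMatrix_mulVec_le {d : ℕ} (x : Fin d → ℝ) :
    ‖toLp 2 (centeringMatrix d *ᵥ x)‖ ≤ ‖toLp 2 x‖ := by
  set a := (d : ℝ)⁻¹ * ∑ i, x i
  have hCx : centeringMatrix d *ᵥ x = fun i => x i - a := by
    rw [centeringMatrix, sub_mulVec, one_mulVec, smul_mulVec]
    ext i
    simp [mulVec, dotProduct, a]
  have hda : (d : ℝ) * a ^ 2 = a * ∑ i, x i := by
    rcases eq_or_ne (d : ℝ) 0 with hd | hd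
    · simp [a, hd]
    · simp only [a]; field_simp
  have hmean : a * ∑ i, x i = (d : ℝ)⁻¹ * (∑ i, x i) ^ 2 := by ring
  simp only [hCx, EuclideanSpace.norm_eq, Real.norm_eq_abs, sq_abs]
  refine Real.sqrt_le_sqrt ?_
  calc ∑ i, (x i - a) ^ 2 = ∑ i, x i ^ 2 - a * ∑ i, x i := by
        simp only [sub_sq, Finset.sum_add_distrib, Finset.sum_sub_distrib, ← Finset.mul_sum,
          ← Finset.sum_mul, Finset.sum_const, Finset.card_univ, Fintype.card_fin, nsmul_eq_mul]
        linarith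
    _ ≤ ∑ i, x i ^ 2 := by
        have : 0 ≤ a * ∑ i, x i := by rw [hmean]; positivity
        linarith

lemma lowRankTangentProj_vecMulVec {d₁ d₂ r : ℕ} (U : Matrix (Fin d₁) (Fin r) ℝ)
    (V : Matrix (Fin d₂) (Fin r) ℝ) (u : Fin d₁ → ℝ) (v : Fin d₂ → ℝ) :
    lowRankTangentProj d₁ d₂ r U V (vecMulVec u v) =
      vecMulVec ((U * Uᵀ) *ᵥ u) v + vecMulVec (centeringMatrix d₁ *ᵥ u) (v ᵥ* (V * Vᵀ))
        - vecMulVec ((U * Uᵀ) *ᵥ u) (v ᵥ* (V * Vᵀ)) := by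
  simp only [lowRankTangentProj, mul_vecMulVec, vecMulVec_mul]
  rfl

theorem stmt_14_general (d₁ d₂ r : ℕ) (μ : ℝ)
    (U : Matrix (Fin d₁) (Fin r) ℝ) (V : Matrix (Fin d₂) (Fin r) ℝ)
    (hU : Uᵀ * U = 1) (hV : Vᵀ * V = 1)
    (hUinc : ∀ t, ∑ j, U t j ^ 2 ≤ μ * r / d₁)
    (hVinc : ∀ m, ∑ j, V m j ^ 2 ≤ μ * r / d₂)
    (hμr : μ * r ≤ d₁)
    (t : Fin d₁) (m m' : Fin d₂) :
    frobNorm (lowRankTangentProj d₁ d₂ r U V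
        (Matrix.single t m 1 - Matrix.single t m' 1))
      ≤ 2 * Real.sqrt (μ * r / d₁) + 4 * Real.sqrt (μ * r / d₂) := by
  set δ : Fin d₂ → ℝ := Pi.single m 1 - Pi.single m' 1
  have hUt : ‖toLp 2 ((U * Uᵀ) *ᵥ Pi.single t 1)‖ ≤ √(μ * r / d₁) := by
    rw [norm_mul_transpose_mulVec hU, norm_transpose_mulVec_single]
    exact Real.sqrt_le_sqrt (hUinc t)
  have hUt_le_one : ‖toLp 2 ((U * Uᵀ) *ᵥ Pi.single t 1)‖ ≤ 1 :=
    hUt.trans (Real.sqrt_le_one.mpr (div_le_one_of_le₀ hμr (Nat.cast_nonneg _)))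
  have hVδ : ‖toLp 2 (δ ᵥ* (V * Vᵀ))‖ ≤ 2 * √(μ * r / d₂) := by
    rw [norm_vecMul_mul_transpose hV, mulVec_sub, toLp_sub, two_mul]
    refine (norm_sub_le _ _).trans (add_le_add ?_ ?_) <;>
      rw [norm_transpose_mulVec_single] <;> exact Real.sqrt_le_sqrt (hVinc _)
  have hδ : ‖toLp 2 δ‖ ≤ 2 := by
    rw [toLp_sub]
    refine (norm_sub_le _ _).trans ?_
    norm_num
  have hCt : ‖toLp 2 (centeringMatrix d₁ *ᵥ Pi.single t 1)‖ ≤ 1 :=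
    (norm_centeringMatrix_mulVec_le _).trans (by simp)
  rw [single_eq_single_vecMulVec_single, single_eq_single_vecMulVec_single, ← vecMulVec_sub,
    lowRankTangentProj_vecMulVec]
  calc _ ≤ _ := (frobNorm_sub_le _ _).trans (add_le_add_left (frobNorm_add_le _ _) _)
    _ ≤ √(μ * r / d₁) * 2 + 1 * (2 * √(μ * r / d₂)) + 1 * (2 * √(μ * r / d₂)) := by
      simp only [frobNorm_vecMulVec]
      gcongr
    _ = _ := by ring

/-- pairwise tangent-projection envelope. Under orthonormality,
row-centering `1ᵀU = 0`, and `μ`-incoherence with `μr ≤ d₁`, the projection of the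
pairwise design matrix `X = e_t (e_m − e_{m'})ᵀ` satisfies
`‖P X‖_F ≤ 2√(μr/d₁) + 4√(μr/d₂)`. -/
theorem stmt_14 (d₁ d₂ r : ℕ) (μ : ℝ)
    (U : Matrix (Fin d₁) (Fin r) ℝ) (V : Matrix (Fin d₂) (Fin r) ℝ)
    (hU : Uᵀ * U = 1) (hV : Vᵀ * V = 1)
    (hU0 : ∀ j, ∑ i, U i j = 0)
    (hUinc : ∀ t, ∑ j, U t j ^ 2 ≤ μ * r / d₁)
    (hVinc : ∀ m, ∑ j, V m j ^ 2 ≤ μ * r / d₂)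
    (hμr : μ * r ≤ d₁)
    (t : Fin d₁) (m m' : Fin d₂) (hmm : m ≠ m') :
    frobNorm (lowRankTangentProj d₁ d₂ r U V
        (Matrix.single t m 1 - Matrix.single t m' 1))
      ≤ 2 * Real.sqrt (μ * r / d₁) + 4 * Real.sqrt (μ * r / d₂) :=
  stmt_14_general d₁ d₂ r μ U V hU hV hUinc hVinc hμr t m m'
end
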